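/- arXiv:1902.10633 — 3 statements merged into one kernel-verified Lean document; each statement's English description precedes it below -/
import Mathlib

section
/- Let m ≥ 1, n = 2^m, d ≥ 1. Let φ : (ZMod n)^d → ℤ be the flattening map φ(f) = ∑_{q=1}^d rep(f_q)·n^{q−1}, where rep(f_q) ∈ {0,…,n−1} is the standard representative. Let I be a nonempty finite index set, and for each i ∈ I let l_i be an integer with 0 ≤ l_i ≤ d·m and a_i an integer with 0 ≤ a_i < 2^{l_i}, and let the frequency cone C_i = {f ∈ (ZMod n)^d : φ(f) ≡ a_i (mod 2^{l_i})}. Assume the cones C_i are pairwise disjoint. Fix i* ∈ I and set w = |{ν₂(a_{i*} − a_i) : i ∈ I, i ≠ i*}|. Then there exists G : (ZMod n)^d → ℂ whose support has cardinality exactly 2^w and whose d-dimensional discrete Fourier transform satisfies Ĝ(f) = 1 for every f ∈ C_{i*} and Ĝ(f) = 0 for every f ∈ ⋃_{i ∈ I, i ≠ i*} C_i. -/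
/-!
Let `E` be the set of valuations `ν₂(a_{i*} - a_i)`, `i ≠ i*`. Disjointness of the cones forces
each such `e` below both `l_i` and `l_{i*}`, and `a_i` differs from `a_{i*}` at bit `e` but not
below. Let `G` be the convolution over `e ∈ E` of the two-point functions `(δ₀ + c_e δ_{t_e}) / 2`,
so that `Ĝ = ∏_e (1 + c_e χ_e) / 2`. The frequency `t_e` is chosen so that `χ_e(f)` depends only on
the bits of `φ(f)` up to `e` and changes sign with bit `e`; normalising `c_e` at `a_{i*}` makes
every factor equal to `1` on `C_{i*}`, while on `C_i` the factor of `e = ν₂(a_{i*} - a_i)`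
vanishes. The `2^w` points `∑_{e ∈ S} t_e`, `S ⊆ E`, are distinct by uniqueness of binary
expansions.
-/

open scoped BigOperators

/-- The `d`-dimensional discrete Fourier transform on `(ZMod n)^d`. -/
noncomputable def dft (n d : ℕ) [NeZero n] (x : (Fin d → ZMod n) → ℂ) :
    (Fin d → ZMod n) → ℂ :=
  fun f => ∑ t : Fin d → ZMod n, x t *
    Complex.exp (-(2 * (Real.pi : ℂ) * Complex.I) *
      (((∑ q, f q * t q : ZMod n)).val : ℂ) / (n : ℂ))

/-- The flattening map `φ(f) = ∑_q rep(f_q) · n^{q-1}`. -/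
def flatten (n d : ℕ) (f : Fin d → ZMod n) : ℤ :=
  ∑ q : Fin d, ((f q).val : ℤ) * (n : ℤ) ^ (q : ℕ)

open Finset

lemma AddChar.map_finsetSum {A M ι : Type*} [AddCommMonoid A] [CommMonoid M] (ψ : AddChar A M)
    (s : Finset ι) (x : ι → A) : ψ (∑ i ∈ s, x i) = ∏ i ∈ s, ψ (x i) := by
  classical
  induction s using Finset.induction_on with
  | empty => simp
  | insert j s hj ih => rw [sum_insert hj, prod_insert hj, AddChar.map_add_eq_mul, ih]

lemma ZMod.stdAddChar_intCast_mul_two_pow {s t : ℕ} (hst : s ≤ t) (y : ℤ) :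
    stdAddChar (N := 2 ^ t) ((y * 2 ^ (t - s) : ℤ) : ZMod (2 ^ t)) =
      stdAddChar (N := 2 ^ s) (y : ZMod (2 ^ s)) := by
  rw [stdAddChar_coe, stdAddChar_coe]
  congr 1
  rw [show t = s + (t - s) by omega]
  push_cast
  rw [Nat.add_sub_cancel_left, pow_add]
  field_simp

lemma ZMod.stdAddChar_two_pow_mul (s : ℕ) (u : ℤ) :
    stdAddChar (N := 2 ^ (s + 1)) ((2 ^ s * u : ℤ) : ZMod (2 ^ (s + 1))) = (-1) ^ u := by
  rw [stdAddChar_coe, ← Complex.exp_pi_mul_I, ← Complex.exp_int_mul]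
  congr 1
  push_cast
  rw [pow_succ]
  field_simp

section Flatten

variable {n d : ℕ} [NeZero n]

lemma flatten_eq_finFunctionFinEquiv (f : Fin d → ZMod n) :
    flatten n d f = (finFunctionFinEquiv (fun q => (⟨(f q).val, ZMod.val_lt _⟩ : Fin n)) : ℕ) := by
  simp [flatten]

lemma val_eq_flatten_ediv_emod (f : Fin d → ZMod n) (q : Fin d) :
    ((f q).val : ℤ) = flatten n d f / n ^ (q : ℕ) % n := by
  rw [flatten_eq_finFunctionFinEquiv]
  have := finFunctionFinEquiv_symm_apply_val
    (finFunctionFinEquiv (fun q => (⟨(f q).val, ZMod.val_lt _⟩ : Fin n))) q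
  rw [Equiv.symm_apply_apply] at this
  exact_mod_cast this

lemma exists_flatten_eq {x : ℤ} (h0 : 0 ≤ x) (hx : x < n ^ d) :
    ∃ f : Fin d → ZMod n, flatten n d f = x := by
  lift x to ℕ using h0
  have hx' : x < n ^ d := by exact_mod_cast hx
  refine ⟨fun q => (finFunctionFinEquiv.symm ⟨x, hx'⟩ q : ℕ), ?_⟩
  rw [flatten_eq_finFunctionFinEquiv]
  simp only [ZMod.val_natCast_of_lt (Fin.is_lt _), Fin.eta, Equiv.apply_symm_apply]

end Flatten

def cone (n d l : ℕ) (a : ℤ) : Set (Fin d → ZMod n) :=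
  {f | flatten n d f % 2 ^ l = a}

section Cone

variable {n d : ℕ} [NeZero n]

lemma cone_inter_nonempty_of_dvd {l l' : ℕ} {a a' : ℤ} (hl' : 2 ^ l' ≤ (n : ℤ) ^ d)
    (ha0 : 0 ≤ a) (ha : a < 2 ^ l) (ha0' : 0 ≤ a') (ha' : a' < 2 ^ l') (hdvd : 2 ^ l ∣ a' - a) :
    (cone n d l a ∩ cone n d l' a').Nonempty := by
  obtain ⟨f, hf⟩ := exists_flatten_eq (n := n) (d := d) ha0' (ha'.trans_le hl')
  refine ⟨f, ?_, ?_⟩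
  · change flatten n d f % 2 ^ l = a
    rw [hf, ← (Int.modEq_iff_dvd.2 hdvd), Int.emod_eq_of_lt ha0 ha]
  · change flatten n d f % 2 ^ l' = a'
    rw [hf, Int.emod_eq_of_lt ha0' ha']

lemma not_two_pow_min_dvd_sub_of_disjoint {l l' : ℕ} {a a' : ℤ}
    (hl : 2 ^ l ≤ (n : ℤ) ^ d) (hl' : 2 ^ l' ≤ (n : ℤ) ^ d)
    (ha0 : 0 ≤ a) (ha : a < 2 ^ l) (ha0' : 0 ≤ a') (ha' : a' < 2 ^ l')
    (hdisj : Disjoint (cone n d l a) (cone n d l' a')) : ¬ 2 ^ min l l' ∣ a - a' := by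
  intro hdvd
  rw [Set.disjoint_iff_inter_eq_empty, ← Set.not_nonempty_iff_eq_empty] at hdisj
  rcases le_total l l' with hle | hle
  · rw [min_eq_left hle, ← dvd_neg, neg_sub] at hdvd
    exact hdisj (cone_inter_nonempty_of_dvd hl' ha0 ha ha0' ha' hdvd)
  · rw [min_eq_right hle] at hdvd
    rw [Set.inter_comm] at hdisj
    exact hdisj (cone_inter_nonempty_of_dvd hl ha0' ha' ha0 ha hdvd)

end Cone

lemma Int.exists_eq_add_two_pow_mul_two_mul {x a : ℤ} {l e : ℕ} (h : x % 2 ^ l = a) (he : e < l) :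
    ∃ K, x = a + 2 ^ e * (2 * K) := by
  refine ⟨2 ^ (l - (e + 1)) * (x / 2 ^ l), ?_⟩
  have hl : (2 : ℤ) ^ l = 2 ^ e * 2 * 2 ^ (l - (e + 1)) := by
    rw [← pow_succ, ← pow_add]; congr 1; omega
  linear_combination (Int.emod_add_mul_ediv x (2 ^ l)).symm + h + (x / 2 ^ l) * hl

lemma padicValInt_lt_of_not_pow_dvd {p : ℕ} [Fact p.Prime] {x : ℤ} {k : ℕ}
    (h : ¬ (p : ℤ) ^ k ∣ x) : padicValInt p x < k :=
  not_le.1 fun hk => h ((padicValInt_dvd_iff k x).2 (Or.inr hk))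

lemma exists_odd_eq_two_pow_padicValInt_mul {x : ℤ} (hx : x ≠ 0) :
    ∃ u, Odd u ∧ x = 2 ^ padicValInt 2 x * u := by
  set ν := padicValInt 2 x
  obtain ⟨u, hu⟩ : (2 : ℤ) ^ ν ∣ x := by exact_mod_cast padicValInt_dvd (p := 2) x
  refine ⟨u, Int.not_even_iff_odd.1 fun ⟨v, hv⟩ => ?_, hu⟩
  have : (2 : ℤ) ^ (ν + 1) ∣ x := ⟨v, by rw [hu, hv, pow_succ]; ring⟩
  have := (padicValInt_dvd_iff (p := 2) _ x).1 (by exact_mod_cast this)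
  omega

lemma padicValInt_sub_lt_min_and_odd_of_disjoint {n d : ℕ} [NeZero n] {l l' : ℕ} {a a' : ℤ}
    (hl : 2 ^ l ≤ (n : ℤ) ^ d) (hl' : 2 ^ l' ≤ (n : ℤ) ^ d)
    (ha0 : 0 ≤ a) (ha : a < 2 ^ l) (ha0' : 0 ≤ a') (ha' : a' < 2 ^ l')
    (hdisj : Disjoint (cone n d l a) (cone n d l' a')) :
    padicValInt 2 (a - a') < min l l' ∧ ∃ u, Odd u ∧ a - a' = 2 ^ padicValInt 2 (a - a') * u := by
  have hndvd := not_two_pow_min_dvd_sub_of_disjoint hl hl' ha0 ha ha0' ha' hdisj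
  exact ⟨padicValInt_lt_of_not_pow_dvd (p := 2) (by exact_mod_cast hndvd),
    exists_odd_eq_two_pow_padicValInt_mul fun h => hndvd (h ▸ dvd_zero _)⟩

/- Bit `e = m q + r` of `flatten f` is bit `r` of the digit `f q`. Pairing with `bitVec m d e`
reads `f q` modulo `2 ^ (r + 1)`, i.e. the bits `m q, …, e` of `flatten f`; `bitPhase m e` is the
resulting character, written as a function of `flatten f`. -/
def bitVec (m d e : ℕ) : Fin d → ZMod (2 ^ m) :=
  fun q => if e / m = q then 2 ^ (m - 1 - e % m) else 0

noncomputable def bitPhase (m e : ℕ) (x : ℤ) : ℂ :=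
  ZMod.stdAddChar (-((x / 2 ^ (m * (e / m)) : ℤ) : ZMod (2 ^ (e % m + 1))))

section Bits

variable {m d : ℕ}

lemma stdAddChar_neg_sum_mul_bitVec (hm : 0 < m) {e : ℕ} (he : e < d * m)
    (f : Fin d → ZMod (2 ^ m)) :
    ZMod.stdAddChar (-(∑ q, f q * bitVec m d e q)) = bitPhase m e (flatten (2 ^ m) d f) := by
  set q₀ : Fin d := ⟨e / m, (Nat.div_lt_iff_lt_mul hm).2 he⟩
  set y := flatten (2 ^ m) d f / 2 ^ (m * (e / m))
  have hr : e % m < m := Nat.mod_lt e hm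
  have hsum : ∑ q, f q * bitVec m d e q = f q₀ * 2 ^ (m - 1 - e % m) := by
    rw [Fintype.sum_eq_single q₀ fun q hq => ?_]
    · simp [bitVec, q₀]
    · simp only [bitVec, mul_ite, mul_zero]
      exact if_neg fun h => hq (Fin.ext h.symm)
  have hdigit : f q₀ = ((y % 2 ^ m : ℤ) : ZMod (2 ^ m)) := by
    have := val_eq_flatten_ediv_emod f q₀
    push_cast [← pow_mul] at this
    rw [← this]
    simp
  have hmod : ((y % 2 ^ m : ℤ) : ZMod (2 ^ (e % m + 1))) = (y : ZMod (2 ^ (e % m + 1))) := by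
    rw [ZMod.intCast_eq_intCast_iff]
    exact_mod_cast (Int.mod_modEq y (2 ^ m)).of_dvd (pow_dvd_pow 2 hr)
  rw [hsum, hdigit, bitPhase, ← hmod, show m - 1 - e % m = m - (e % m + 1) by omega, ← neg_mul]
  exact_mod_cast ZMod.stdAddChar_intCast_mul_two_pow hr (-(y % 2 ^ m))

lemma bitPhase_add_two_pow_mul (m e : ℕ) (x u : ℤ) :
    bitPhase m e (x + 2 ^ e * u) = (-1) ^ u * bitPhase m e x := by
  have hx : x + 2 ^ e * u = x + 2 ^ (e % m) * u * 2 ^ (m * (e / m)) := by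
    rw [mul_right_comm, ← pow_add, Nat.mod_add_div]
  rw [bitPhase, bitPhase, hx, Int.add_mul_ediv_right _ _ (by positivity), Int.cast_add, neg_add,
    AddChar.map_add_eq_mul, mul_comm, ← Int.cast_neg, ← mul_neg,
    ZMod.stdAddChar_two_pow_mul, zpow_neg, ← inv_zpow, inv_neg_one]

lemma bitPhase_ne_zero (m e : ℕ) (x : ℤ) : bitPhase m e x ≠ 0 :=
  Circle.coe_ne_zero _

lemma inv_bitPhase_mul_stdAddChar (hm : 0 < m) {e : ℕ} (he : e < d * m)
    {f : Fin d → ZMod (2 ^ m)} {x u : ℤ} (hf : flatten (2 ^ m) d f = x + 2 ^ e * u) :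
    (bitPhase m e x)⁻¹ * ZMod.stdAddChar (-(∑ q, f q * bitVec m d e q)) = (-1) ^ u := by
  rw [stdAddChar_neg_sum_mul_bitVec hm he, hf, bitPhase_add_two_pow_mul, mul_comm,
    mul_inv_cancel_right₀ (bitPhase_ne_zero m e x)]

lemma bitFactor_eq_one_of_mem_cone (hm : 0 < m) {e l : ℕ} (he : e < d * m) (hel : e < l) {a : ℤ}
    {f : Fin d → ZMod (2 ^ m)} (hf : f ∈ cone (2 ^ m) d l a) :
    (1 + (bitPhase m e a)⁻¹ * ZMod.stdAddChar (-(∑ q, f q * bitVec m d e q))) / 2 = 1 := by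
  obtain ⟨K, hK⟩ := Int.exists_eq_add_two_pow_mul_two_mul hf hel
  rw [inv_bitPhase_mul_stdAddChar hm he hK, (even_two_mul K).neg_one_zpow]
  norm_num

lemma bitFactor_eq_zero_of_mem_cone (hm : 0 < m) {e l' : ℕ} (he : e < d * m) (hel' : e < l')
    {a a' u : ℤ} (hu : Odd u) (haa' : a - a' = 2 ^ e * u)
    {f : Fin d → ZMod (2 ^ m)} (hf : f ∈ cone (2 ^ m) d l' a') :
    (1 + (bitPhase m e a)⁻¹ * ZMod.stdAddChar (-(∑ q, f q * bitVec m d e q))) / 2 = 0 := by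
  obtain ⟨K, hK⟩ := Int.exists_eq_add_two_pow_mul_two_mul hf hel'
  have hflat : flatten (2 ^ m) d f = a + 2 ^ e * (2 * K - u) := by
    linear_combination hK - haa'
  rw [inv_bitPhase_mul_stdAddChar hm he hflat, ((even_two_mul K).sub_odd hu).neg_one_zpow]
  norm_num

end Bits

def bitsAt (m : ℕ) (S : Finset ℕ) (q : ℕ) : Finset ℕ :=
  (S.filter (· / m = q)).image (fun e => m - 1 - e % m)

section BitsInjective

variable {m : ℕ} (d : ℕ)

lemma bitsAt_subset_range (hm : 0 < m) (S : Finset ℕ) (q : ℕ) : bitsAt m S q ⊆ range m := by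
  intro j hj
  obtain ⟨e, -, rfl⟩ := mem_image.1 hj
  exact mem_range.2 (by omega)

lemma Nat.eq_of_div_eq_of_sub_mod_eq (hm : 0 < m) {e e' : ℕ} (hdiv : e / m = e' / m)
    (hmod : m - 1 - e % m = m - 1 - e' % m) : e = e' := by
  rw [← Nat.div_add_mod e m, ← Nat.div_add_mod e' m, hdiv]
  have := Nat.mod_lt e hm
  have := Nat.mod_lt e' hm
  omega

lemma val_sum_bitVec_apply (hm : 0 < m) (S : Finset ℕ) (q : Fin d) :
    ((∑ e ∈ S, bitVec m d e) q).val = ∑ j ∈ bitsAt m S q, 2 ^ j := by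
  have hinj : Set.InjOn (fun e => m - 1 - e % m) ↑(S.filter (· / m = q)) := fun e he e' he' =>
    Nat.eq_of_div_eq_of_sub_mod_eq hm ((mem_filter.1 he).2.trans (mem_filter.1 he').2.symm)
  have hsum : (∑ e ∈ S, bitVec m d e) q = ((∑ j ∈ bitsAt m S q, 2 ^ j : ℕ) : ZMod (2 ^ m)) := by
    rw [Finset.sum_apply, bitsAt, sum_image hinj, sum_filter]
    push_cast
    rfl
  rw [hsum, ZMod.val_natCast_of_lt
    (Nat.geomSum_lt le_rfl fun j hj => mem_range.1 (bitsAt_subset_range hm S q hj))]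

lemma injOn_sum_bitVec (hm : 0 < m) :
    Set.InjOn (fun S : Finset ℕ => ∑ e ∈ S, bitVec m d e) {S | ∀ e ∈ S, e < d * m} := by
  suffices key : ∀ S S' : Finset ℕ, (∀ e ∈ S, e < d * m) →
      ∑ e ∈ S, bitVec m d e = ∑ e ∈ S', bitVec m d e → S ⊆ S' from
    fun S hS S' hS' h => (key S S' hS h).antisymm (key S' S hS' h.symm)
  intro S S' hS h e he
  set q₀ : Fin d := ⟨e / m, (Nat.div_lt_iff_lt_mul hm).2 (hS e he)⟩
  have hbits : bitsAt m S q₀ = bitsAt m S' q₀ := by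
    apply Finset.geomSum_injective le_rfl
    simpa only [val_sum_bitVec_apply d hm] using congrArg (fun v => (v q₀).val) h
  have hmem : m - 1 - e % m ∈ bitsAt m S' q₀ :=
    hbits ▸ mem_image_of_mem _ (mem_filter.2 ⟨he, rfl⟩)
  obtain ⟨e', he', hee'⟩ := mem_image.1 hmem
  rw [mem_filter] at he'
  exact Nat.eq_of_div_eq_of_sub_mod_eq hm he'.2 hee' ▸ he'.1

end BitsInjective

/-- The convolution over `e ∈ E` of the two-point functions `(δ₀ + c e • δ_{t e}) / 2`. -/
noncomputable def twoPointConv {n d : ℕ} {κ : Type*} (E : Finset κ) (t : κ → Fin d → ZMod n)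
    (c : κ → ℂ) : (Fin d → ZMod n) → ℂ :=
  fun x => ∑ S ∈ E.powerset, if ∑ e ∈ S, t e = x then (∏ e ∈ S, c e) / 2 ^ #E else 0

section TwoPointConv

variable {n d : ℕ} {κ : Type*} {E : Finset κ} {t : κ → Fin d → ZMod n} {c : κ → ℂ}

lemma dft_eq_sum_stdAddChar [NeZero n] (x : (Fin d → ZMod n) → ℂ) (f : Fin d → ZMod n) :
    dft n d x f = ∑ t, x t * ZMod.stdAddChar (-(∑ q, f q * t q)) := by
  refine sum_congr rfl fun t _ => ?_
  rw [AddChar.map_neg_eq_inv, ZMod.stdAddChar_apply, ZMod.toCircle_apply, ← Complex.exp_neg]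
  ring_nf

lemma dft_twoPointConv [NeZero n] (f : Fin d → ZMod n) :
    dft n d (twoPointConv E t c) f =
      ∏ e ∈ E, (1 + c e * ZMod.stdAddChar (-(∑ q, f q * t e q))) / 2 := by
  have hchar : ∀ S : Finset κ, ZMod.stdAddChar (-(∑ q, f q * (∑ e ∈ S, t e) q)) =
      ∏ e ∈ S, ZMod.stdAddChar (-(∑ q, f q * t e q)) := fun S => by
    rw [← AddChar.map_finsetSum]
    simp only [Finset.sum_apply, mul_sum]
    rw [sum_neg_distrib, sum_comm]
  rw [dft_eq_sum_stdAddChar, prod_div_distrib, prod_const, prod_one_add, sum_div]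
  simp only [twoPointConv, sum_mul, ite_mul, zero_mul]
  rw [sum_comm]
  refine sum_congr rfl fun S _ => ?_
  rw [sum_ite_eq, if_pos (mem_univ _), hchar, prod_mul_distrib]
  ring

lemma ncard_support_twoPointConv (ht : Set.InjOn (fun S => ∑ e ∈ S, t e) ↑E.powerset)
    (hc : ∀ e ∈ E, c e ≠ 0) : (Function.support (twoPointConv E t c)).ncard = 2 ^ #E := by
  have hval : ∀ S ∈ E.powerset, twoPointConv E t c (∑ e ∈ S, t e) = (∏ e ∈ S, c e) / 2 ^ #E :=
    fun S hS => by
      rw [twoPointConv, sum_eq_single S (fun S' hS' hne => if_neg fun h => hne (ht hS' hS h))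
        (fun h => absurd hS h), if_pos rfl]
  have hsupp :
      Function.support (twoPointConv E t c) = ↑(E.powerset.image fun S => ∑ e ∈ S, t e) := by
    ext x
    simp only [Function.mem_support, coe_image, Set.mem_image, mem_coe]
    constructor
    · intro hx
      by_contra! hne
      exact hx (sum_eq_zero fun S hS => if_neg (hne S hS))
    · rintro ⟨S, hS, rfl⟩
      rw [hval S hS]
      exact div_ne_zero (prod_ne_zero_iff.2 fun e he => hc e (mem_powerset.1 hS he))
        (pow_ne_zero _ two_ne_zero)
  rw [hsupp, Set.ncard_coe_finset, card_image_of_injOn ht, card_powerset]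

end TwoPointConv

theorem stmt3_general (m : ℕ) (hm : 1 ≤ m) (n : ℕ) (hn : n = 2 ^ m) [NeZero n]
    (d : ℕ)
    {ι : Type} [Fintype ι] [DecidableEq ι]
    (l : ι → ℕ) (hl : ∀ i, l i ≤ d * m)
    (a : ι → ℤ) (ha0 : ∀ i, 0 ≤ a i) (ha : ∀ i, a i < 2 ^ l i)
    (C : ι → Set (Fin d → ZMod n))
    (hC : ∀ i, C i = {f : Fin d → ZMod n | flatten n d f % 2 ^ l i = a i})
    (hdisj : Pairwise (fun i j => Disjoint (C i) (C j)))
    (istar : ι)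
    (w : ℕ)
    (hw : w = ((Finset.univ.erase istar).image
      (fun i => padicValInt 2 (a istar - a i))).card) :
    ∃ G : (Fin d → ZMod n) → ℂ,
      (Function.support G).ncard = 2 ^ w ∧
      (∀ f ∈ C istar, dft n d G f = 1) ∧
      (∀ i, i ≠ istar → ∀ f ∈ C i, dft n d G f = 0) := by
  subst hn
  have hlen : ∀ i, (2 : ℤ) ^ l i ≤ ((2 ^ m : ℕ) : ℤ) ^ d := fun i => by
    rw [Nat.cast_pow, Nat.cast_ofNat, ← pow_mul, mul_comm]
    exact pow_le_pow_right₀ one_le_two (hl i)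
  have hsep : ∀ i ≠ istar, padicValInt 2 (a istar - a i) < min (l istar) (l i) ∧
      ∃ u, Odd u ∧ a istar - a i = 2 ^ padicValInt 2 (a istar - a i) * u := fun i hi =>
    padicValInt_sub_lt_min_and_odd_of_disjoint (hlen istar) (hlen i) (ha0 istar) (ha istar)
      (ha0 i) (ha i) (by simpa only [hC, cone] using hdisj hi.symm)
  set E := (univ.erase istar).image fun i => padicValInt 2 (a istar - a i)
  have hE : ∀ e ∈ E, e < l istar ∧ e < d * m := by
    simp only [E, mem_image, mem_erase]
    rintro _ ⟨i, ⟨hi, -⟩, rfl⟩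
    have := (hsep i hi).1
    exact ⟨by omega, by have := hl i; omega⟩
  refine ⟨twoPointConv E (bitVec m d) fun e => (bitPhase m e (a istar))⁻¹, ?_, ?_, ?_⟩
  · rw [ncard_support_twoPointConv ((injOn_sum_bitVec d hm).mono fun S hS e he =>
      (hE e (mem_powerset.1 hS he)).2) fun e _ => inv_ne_zero (bitPhase_ne_zero m e _), hw]
  · intro f hf
    rw [hC] at hf
    rw [dft_twoPointConv]
    exact prod_eq_one fun e he => bitFactor_eq_one_of_mem_cone hm (hE e he).2 (hE e he).1 hf
  · intro i hi f hf
    rw [hC] at hf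
    obtain ⟨hlt, u, hu, hau⟩ := hsep i hi
    have he : padicValInt 2 (a istar - a i) ∈ E :=
      mem_image_of_mem _ (mem_erase.2 ⟨hi, mem_univ i⟩)
    rw [dft_twoPointConv]
    exact prod_eq_zero he (bitFactor_eq_zero_of_mem_cone hm (hE _ he).2
      (hlt.trans_le (min_le_right _ _)) hu hau hf)

theorem stmt3 (m : ℕ) (hm : 1 ≤ m) (n : ℕ) (hn : n = 2 ^ m) [NeZero n]
    (d : ℕ) (hd : 1 ≤ d)
    {ι : Type} [Fintype ι] [Nonempty ι] [DecidableEq ι]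
    (l : ι → ℕ) (hl : ∀ i, l i ≤ d * m)
    (a : ι → ℤ) (ha0 : ∀ i, 0 ≤ a i) (ha : ∀ i, a i < 2 ^ l i)
    (C : ι → Set (Fin d → ZMod n))
    (hC : ∀ i, C i = {f : Fin d → ZMod n | flatten n d f % 2 ^ l i = a i})
    (hdisj : Pairwise (fun i j => Disjoint (C i) (C j)))
    (istar : ι)
    (w : ℕ)
    (hw : w = ((Finset.univ.erase istar).image
      (fun i => padicValInt 2 (a istar - a i))).card) :
    ∃ G : (Fin d → ZMod n) → ℂ,
      (Function.support G).ncard = 2 ^ w ∧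
      (∀ f ∈ C istar, dft n d G f = 1) ∧
      (∀ i, i ≠ istar → ∀ f ∈ C i, dft n d G f = 0) :=
  stmt3_general m hm n hn d l hl a ha0 ha C hC hdisj istar w hw
end

section
/- Fix a power of two n ≥ 2, a positive integer d, N = n^d, and an integer k with 1 ≤ k ≤ N. Let S be a Bernoulli set with rate k/N in (ZMod n)^d, and let B = (B_1,…,B_d) be a vector of powers of two with B_q dividing n for each q. Then the expected cardinality of S^(B) satisfies E[|S^(B)|] ≤ k²/|B|. -/
open scoped BigOperators ENNReal
open MeasureTheory Finset

/-!
Every point of `S^(B)` is the common reduction of an ordered pair of distinct points of `S`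
lying in one fibre of the reduction map `π : (ZMod n)^d → [B]`, so `|S^(B)|` is at most the
number of such pairs. A fixed pair of distinct points lies in `S` with probability `(k/N)^2`,
and since `π` is a surjective group homomorphism all its fibres have size `N/|B|`, giving
`N^2/|B|` pairs in a common fibre. Hence `E|S^(B)| ≤ (N^2/|B|) (k/N)^2 = k^2/|B|`.
-/

lemma Set.ncard_collisions_le_card_pairs {α β γ : Type*} [Fintype α] [DecidableEq α]
    [DecidableEq β] (π : α → β) (ω : α → γ) (s : Set γ) [DecidablePred (· ∈ s)] :
    {f | ∃ g h, g ≠ h ∧ ω g ∈ s ∧ ω h ∈ s ∧ π g = f ∧ π h = f}.ncard ≤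
      #{x ∈ ({x : α × α | x.1 ≠ x.2 ∧ π x.1 = π x.2} : Finset _) | ω x.1 ∈ s ∧ ω x.2 ∈ s} := by
  have himage : {f | ∃ g h, g ≠ h ∧ ω g ∈ s ∧ ω h ∈ s ∧ π g = f ∧ π h = f} =
      (fun x : α × α => π x.1) ''
        ↑({x ∈ ({x : α × α | x.1 ≠ x.2 ∧ π x.1 = π x.2} : Finset _) | ω x.1 ∈ s ∧ ω x.2 ∈ s}) := by
    ext f
    simp only [Set.mem_ofPred_eq, Set.mem_image, coe_filter, mem_filter, Prod.exists]
    grind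
  rw [himage, ← Set.ncard_coe_finset]
  exact Set.ncard_image_le (Finset.finite_toSet _)

lemma AddMonoidHom.card_sameFiber_mul_card_eq_sq {G H : Type*} [AddGroup G] [AddGroup H]
    [Fintype G] [DecidableEq H] (π : G →+ H) (hπ : Function.Surjective π) :
    #{x : G × G | π x.1 = π x.2} * Nat.card H = Nat.card G ^ 2 := by
  have e : {x : G × G // π x.1 = π x.2} ≃ G × π.ker :=
    { toFun := fun x => (x.1.1, ⟨-x.1.1 + x.1.2, by simp [x.2]⟩)
      invFun := fun y => ⟨(y.1, y.1 + y.2), by simp [π.mem_ker.1 y.2.2]⟩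
      left_inv := fun x => by ext <;> simp
      right_inv := fun y => by ext <;> simp }
  have hcard : Nat.card π.ker * Nat.card H = Nat.card G := by
    rw [← π.ker.card_mul_index, AddSubgroup.index_ker π, π.range_eq_top.2 hπ, AddSubgroup.card_top]
  rw [← Fintype.card_subtype, ← Nat.card_eq_fintype_card, Nat.card_congr e, Nat.card_prod,
    mul_assoc, hcard, sq]

lemma MeasureTheory.Measure.pi_setOf_mem_and_mem {ι α : Type*} [Fintype ι] [MeasurableSpace α]
    (ν : Measure α) [IsProbabilityMeasure ν] {i j : ι} (hij : i ≠ j) (s : Set α) :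
    Measure.pi (fun _ : ι => ν) {ω | ω i ∈ s ∧ ω j ∈ s} = ν s ^ 2 := by
  classical
  have hset : {ω : ι → α | ω i ∈ s ∧ ω j ∈ s} = (({i, j} : Finset ι) : Set ι).pi fun _ => s := by
    ext ω; simp
  rw [hset, Measure.pi_pi_finset, prod_const, card_pair hij]

lemma MeasureTheory.lintegral_card_pairs_mem {ι α : Type*} [Fintype ι] [MeasurableSpace α]
    (ν : Measure α) [IsProbabilityMeasure ν] (Q : Finset (ι × ι)) (hQ : ∀ x ∈ Q, x.1 ≠ x.2)
    {s : Set α} (hs : MeasurableSet s) [DecidablePred (· ∈ s)] :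
    ∫⁻ ω, (#{x ∈ Q | ω x.1 ∈ s ∧ ω x.2 ∈ s} : ℝ≥0∞) ∂Measure.pi (fun _ : ι => ν) =
      #Q * ν s ^ 2 := by
  have hmeas (x : ι × ι) : MeasurableSet {ω : ι → α | ω x.1 ∈ s ∧ ω x.2 ∈ s} :=
    (measurable_pi_apply x.1 hs).inter (measurable_pi_apply x.2 hs)
  have hterm (x : ι × ι) :
      (fun ω : ι → α => if ω x.1 ∈ s ∧ ω x.2 ∈ s then (1 : ℝ≥0∞) else 0) =
        {ω | ω x.1 ∈ s ∧ ω x.2 ∈ s}.indicator 1 := by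
    ext ω; simp [Set.indicator_apply]
  simp_rw [card_filter, Nat.cast_sum, Nat.cast_ite, Nat.cast_one, Nat.cast_zero]
  rw [lintegral_finsetSum _ fun x _ => by rw [hterm]; exact measurable_one.indicator (hmeas x)]
  simp_rw [hterm, lintegral_indicator_one (hmeas _)]
  rw [sum_congr rfl fun x hx => Measure.pi_setOf_mem_and_mem ν (hQ x hx) s, sum_const,
    nsmul_eq_mul]

lemma isProbabilityMeasure_bernoulli {p : ℝ≥0∞} (hp : p ≤ 1) :
    IsProbabilityMeasure ((1 - p) • Measure.dirac false + p • Measure.dirac true) :=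
  ⟨by simp [tsub_add_cancel_of_le hp]⟩

lemma ENNReal.natCast_mul_div_sq {a g h : ℕ} (k : ℝ≥0∞) (hag : a * h = g ^ 2) (hg : g ≠ 0)
    (hh : h ≠ 0) : (a : ℝ≥0∞) * (k / g) ^ 2 = k ^ 2 / h := by
  rw [ENNReal.eq_div_iff (by exact_mod_cast hh) (natCast_ne_top h)]
  calc (h : ℝ≥0∞) * (a * (k / g) ^ 2) = ((a * h : ℕ) : ℝ≥0∞) * (k / g) ^ 2 := by push_cast; ring
    _ = (g * (k / g)) ^ 2 := by rw [hag]; push_cast; ring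
    _ = k ^ 2 := by rw [ENNReal.mul_div_cancel (by exact_mod_cast hg) (natCast_ne_top g)]

theorem stmt12_general (n : ℕ) [NeZero n]
    (d : ℕ) (k : ℕ) (hkN : k ≤ n ^ d)
    (B : Fin d → ℕ) (hB : ∀ q, B q ∣ n)
    (μ : Measure ((Fin d → ZMod n) → Bool))
    (hμ : μ = Measure.pi fun _ : Fin d → ZMod n =>
      (1 - (k : ℝ≥0∞) / ((n : ℝ≥0∞) ^ d)) • Measure.dirac false +
        ((k : ℝ≥0∞) / ((n : ℝ≥0∞) ^ d)) • Measure.dirac true) :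
    ∫⁻ ω, (({f : ∀ q, ZMod (B q) |
        ∃ g h : Fin d → ZMod n, g ≠ h ∧ ω g = true ∧ ω h = true ∧
          (∀ q, ZMod.castHom (hB q) (ZMod (B q)) (g q) = f q) ∧
          (∀ q, ZMod.castHom (hB q) (ZMod (B q)) (h q) = f q)}.ncard : ℝ≥0∞)) ∂μ
      ≤ (k : ℝ≥0∞) ^ 2 / ∏ q, ((B q : ℕ) : ℝ≥0∞) := by
  classical
  have (q : Fin d) : NeZero (B q) := ⟨fun h => NeZero.ne n (zero_dvd_iff.1 (h ▸ hB q))⟩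
  set π := AddMonoidHom.piMap fun q => (ZMod.castHom (hB q) (ZMod (B q))).toAddMonoidHom
  have hπ : Function.Surjective π := .piMap fun q => ZMod.castHom_surjective (hB q)
  have hp : (k : ℝ≥0∞) / (n : ℝ≥0∞) ^ d ≤ 1 :=
    ENNReal.div_le_of_le_mul (by rw [one_mul]; exact_mod_cast hkN)
  have := isProbabilityMeasure_bernoulli hp
  have hcoll (ω : (Fin d → ZMod n) → Bool) := Set.ncard_collisions_le_card_pairs π ω {true}
  subst hμ
  calc _ ≤ _ := lintegral_mono fun ω => Nat.cast_le.2 <|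
        (congrArg Set.ncard (by ext f; simp [π, funext_iff])).trans_le (hcoll ω)
    _ = #{x : _ × _ | x.1 ≠ x.2 ∧ π x.1 = π x.2} * ((k : ℝ≥0∞) / n ^ d) ^ 2 := by
        rw [lintegral_card_pairs_mem _ _ (fun x hx => (mem_filter.1 hx).2.1)
          (measurableSet_singleton true)]
        simp
    _ ≤ #{x : _ × _ | π x.1 = π x.2} * ((k : ℝ≥0∞) / n ^ d) ^ 2 := by
        gcongr
        exact And.right
    _ = _ := by
        have hfib := π.card_sameFiber_mul_card_eq_sq hπ
        simp only [Nat.card_pi, Nat.card_zmod, prod_const, card_univ, Fintype.card_fin] at hfib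
        rw [← Nat.cast_pow, ← Nat.cast_prod]
        exact ENNReal.natCast_mul_div_sq _ hfib (pow_ne_zero _ (NeZero.ne n))
          (prod_ne_zero_iff.2 fun q _ => NeZero.ne _)

theorem stmt12 (m : ℕ) (hm : 1 ≤ m) (n : ℕ) (hn : n = 2 ^ m) [NeZero n]
    (d : ℕ) (hd : 1 ≤ d) (k : ℕ) (hk1 : 1 ≤ k) (hkN : k ≤ n ^ d)
    (B : Fin d → ℕ) (hB2 : ∀ q, ∃ e : ℕ, B q = 2 ^ e) (hB : ∀ q, B q ∣ n)
    (μ : Measure ((Fin d → ZMod n) → Bool))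
    (hμ : μ = Measure.pi fun _ : Fin d → ZMod n =>
      (1 - (k : ℝ≥0∞) / ((n : ℝ≥0∞) ^ d)) • Measure.dirac false +
        ((k : ℝ≥0∞) / ((n : ℝ≥0∞) ^ d)) • Measure.dirac true) :
    ∫⁻ ω, (({f : ∀ q, ZMod (B q) |
        ∃ g h : Fin d → ZMod n, g ≠ h ∧ ω g = true ∧ ω h = true ∧
          (∀ q, ZMod.castHom (hB q) (ZMod (B q)) (g q) = f q) ∧
          (∀ q, ZMod.castHom (hB q) (ZMod (B q)) (h q) = f q)}.ncard : ℝ≥0∞)) ∂μ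
      ≤ (k : ℝ≥0∞) ^ 2 / ∏ q, ((B q : ℕ) : ℝ≥0∞) :=
  stmt12_general n d k hkN B hB μ hμ
end

section
/- There is an absolute constant C > 0 such that the following holds. Fix a power of two n ≥ 2, a positive integer d, N = n^d, and an integer k with 1 ≤ k ≤ N. Let S be a Bernoulli set with rate k/N in (ZMod n)^d. Let B = (B_1,…,B_d) and B' = (B'_1,…,B'_d) be vectors of powers of two with B'_q | B_q | n for every q and with |B|·|B'| ≥ k². Then with probability at least 1 − 1/N³ the following event occurs: for every b ∈ [B'], the number of f ∈ S^(B) with f mod B' = b is at most C·log₂ N. -/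
/-!
Fix `b`. If `t` fibres of the reduction above `b` contain two points of `S` each, choosing one pair
`g < h` in each of them gives `2t` distinct points of `S`, an event of probability `p ^ (2t)`.
Ordered pairs `g ≠ h` with a common image in `[B]` lying above `b` number at most
`N² / (|B| |B'|) ≤ N² / k²`, since both reductions are surjective homomorphisms and their fibres
are cosets of their kernels. Hence there are at most `(N² / (2k²)) ^ t` families of `t` such pairs,
and with `p = k / N` the union bound gives `2⁻ᵗ` for each `b`. Taking `t = 4 log₂ N` and summing
over the at most `N` values of `b` leaves `N⁻³`.
-/

open scoped BigOperators ENNReal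
open MeasureTheory Finset Function

namespace ZMod

def piCastHom {ι : Type*} {a b : ι → ℕ} (h : ∀ i, b i ∣ a i) :
    (∀ i, ZMod (a i)) →+ ∀ i, ZMod (b i) :=
  AddMonoidHom.pi fun i =>
    (castHom (h i) (ZMod (b i))).toAddMonoidHom.comp (Pi.evalAddMonoidHom _ i)

@[simp]
lemma piCastHom_apply {ι : Type*} {a b : ι → ℕ} (h : ∀ i, b i ∣ a i) (x : ∀ i, ZMod (a i))
    (i : ι) : piCastHom h x i = castHom (h i) (ZMod (b i)) (x i) :=
  rfl

lemma piCastHom_surjective {ι : Type*} {a b : ι → ℕ} (h : ∀ i, b i ∣ a i) :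
    Surjective (piCastHom h) :=
  Surjective.piMap fun i => castHom_surjective (h i)

end ZMod

namespace AddMonoidHom

variable {G H K : Type*} [Fintype G] [Fintype H] [Fintype K] [DecidableEq H] [DecidableEq K]

lemma card_mul_card_fiber_of_surjective [AddGroup G] [AddGroup H] (φ : G →+ H)
    (hφ : Surjective φ) (y : H) : Fintype.card H * #{g | φ g = y} = Fintype.card G := by
  calc Fintype.card H * #{g | φ g = y} = ∑ y' : H, #{g | φ g = y'} := by
        rw [sum_congr rfl fun y' _ => card_fiber_eq_of_mem_range φ (hφ y') (hφ y), sum_const,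
          card_univ, smul_eq_mul]
    _ = Fintype.card G := (card_eq_sum_card_fiberwise fun _ _ => mem_univ _).symm

lemma card_fiberPairs_mul_card_mul_card [AddCommGroup G] [AddCommGroup H] [AddCommGroup K]
    (φ : G →+ H) (ψ : G →+ K) (hφ : Surjective φ) (hψ : Surjective ψ) (b : K) :
    #{x : G × G | φ x.1 = φ x.2 ∧ ψ x.1 = b} * (Fintype.card H * Fintype.card K) =
      Fintype.card G ^ 2 := by
  have hprod : #{x : G × G | φ x.1 = φ x.2 ∧ ψ x.1 = b} = #{g | ψ g = b} * #{g | φ g = 0} := by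
    rw [← card_product]
    refine card_nbij' (fun x => (x.1, x.2 - x.1)) (fun y => (y.1, y.1 + y.2)) ?_ ?_ ?_ ?_ <;>
      intro x hx <;> simp_all [eq_comm]
  calc _ = (Fintype.card K * #{g | ψ g = b}) * (Fintype.card H * #{g | φ g = 0}) := by
        rw [hprod]; ring
    _ = Fintype.card G ^ 2 := by
      rw [ψ.card_mul_card_fiber_of_surjective hψ b, φ.card_mul_card_fiber_of_surjective hφ 0, sq]

end AddMonoidHom

lemma ENNReal.mul_inv_two_pow_four_mul_le {x : ℝ≥0∞} {L : ℕ} (hx : x ≤ 2 ^ L) :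
    x * 2⁻¹ ^ (4 * L) ≤ 1 / ((2 ^ L) ^ 3) := by
  have hcancel : (2 : ℝ≥0∞) ^ L * (2 ^ L)⁻¹ = 1 := ENNReal.mul_inv_cancel (by simp) (by simp)
  calc x * 2⁻¹ ^ (4 * L) ≤ 2 ^ L * ((2 ^ L)⁻¹) ^ 4 := by
        rw [mul_comm 4 L, pow_mul, ENNReal.inv_pow]
        gcongr
    _ = (2 ^ L * (2 ^ L)⁻¹) * ((2 ^ L)⁻¹) ^ 3 := by ring
    _ = 1 / ((2 ^ L) ^ 3) := by rw [hcancel, one_mul, ← ENNReal.inv_pow, one_div]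

lemma one_sub_le_measure_of_compl_subset {α : Type*} [MeasurableSpace α] {ν : Measure α}
    [IsProbabilityMeasure ν] {s t : Set α} (h : sᶜ ⊆ t) : 1 - ν t ≤ ν s :=
  tsub_le_iff_right.2 <| measure_univ (μ := ν) ▸ (measure_univ_le_add_compl s).trans (by gcongr)

noncomputable def bernoulliMeasure (p : ℝ≥0∞) : Measure Bool :=
  (1 - p) • Measure.dirac false + p • Measure.dirac true

lemma isProbabilityMeasure_bernoulliMeasure {p : ℝ≥0∞} (hp : p ≤ 1) :
    IsProbabilityMeasure (bernoulliMeasure p) :=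
  ⟨by simp [bernoulliMeasure, tsub_add_cancel_of_le hp]⟩

lemma pi_bernoulliMeasure_forall_mem_eq_true {ι : Type*} [Fintype ι] {p : ℝ≥0∞} (hp : p ≤ 1)
    (s : Finset ι) :
    Measure.pi (fun _ : ι => bernoulliMeasure p) {ω | ∀ x ∈ s, ω x = true} = p ^ #s := by
  classical
  have := isProbabilityMeasure_bernoulliMeasure hp
  have hpi : {ω : ι → Bool | ∀ x ∈ s, ω x = true} =
      Set.univ.pi fun x => if x ∈ s then {true} else Set.univ := by
    ext ω
    simp only [Set.mem_ofPred_eq, Set.mem_pi, Set.mem_univ, true_implies]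
    refine forall_congr' fun x => ?_
    split_ifs <;> simp [*]
  have hfactor : ∀ x, bernoulliMeasure p (if x ∈ s then {true} else Set.univ) =
      if x ∈ s then p else 1 := by
    intro x
    split_ifs <;> simp [bernoulliMeasure, tsub_add_cancel_of_le hp]
  rw [hpi, Measure.pi_pi, prod_congr rfl fun x _ => hfactor x, prod_ite_mem, univ_inter,
    prod_const]

section Collisions

variable {Ω F : Type*}

-- With `ω` the indicator of `S` and `π` the reduction mod `B`, this is `S^(B)`.
def collisionSet (π : Ω → F) (ω : Ω → Bool) : Set F :=
  {f | ∃ g h, g ≠ h ∧ ω g = true ∧ ω h = true ∧ π g = f ∧ π h = f}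

lemma two_mul_card_filter_fst_lt_snd_le {α : Type*} [LinearOrder α] {Q : Finset (α × α)}
    (hQ : ∀ x ∈ Q, x.swap ∈ Q) : 2 * #{x ∈ Q | x.1 < x.2} ≤ #Q := by
  set P := {x ∈ Q | x.1 < x.2}
  have hdisj : Disjoint P (P.image Prod.swap) := by
    simp only [P, disjoint_left, mem_image, mem_filter]
    rintro x ⟨-, hlt⟩ ⟨y, ⟨-, hlt'⟩, rfl⟩
    exact lt_asymm hlt hlt'
  have hsub : P ∪ P.image Prod.swap ⊆ Q := by
    simp only [P, union_subset_iff, filter_subset, image_subset_iff, mem_filter, true_and]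
    exact fun x hx => hQ x hx.1
  calc 2 * #P = #(P ∪ P.image Prod.swap) := by
        rw [card_union_of_disjoint hdisj, card_image_of_injective _ Prod.swap_injective, two_mul]
    _ ≤ #Q := card_le_card hsub

lemma card_image_fst_union_image_snd [DecidableEq Ω] (π : Ω → F) {R : Finset (Ω × Ω)}
    (hR : ∀ x ∈ R, x.1 ≠ x.2 ∧ π x.1 = π x.2) (hinj : Set.InjOn (π ∘ Prod.fst) (R : Set (Ω × Ω))) :
    #(R.image Prod.fst ∪ R.image Prod.snd) = 2 * #R := by
  have hinj' : Set.InjOn (π ∘ Prod.snd) (R : Set (Ω × Ω)) := by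
    intro x hx y hy hxy
    exact hinj hx hy (by simpa [(hR x hx).2, (hR y hy).2] using hxy)
  have hdisj : Disjoint (R.image Prod.fst) (R.image Prod.snd) := by
    simp only [disjoint_left, mem_image]
    rintro _ ⟨x, hx, rfl⟩ ⟨y, hy, hyx⟩
    have : y = x := hinj hy hx (by simp [(hR y hy).2, hyx])
    exact (hR x hx).1 (this ▸ hyx).symm
  rw [card_union_of_disjoint hdisj, card_image_of_injOn hinj.of_comp,
    card_image_of_injOn hinj'.of_comp, two_mul]

lemma exists_pairs_of_le_ncard_collisionSet_inter [Fintype Ω] [LinearOrder Ω] (π : Ω → F)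
    (ω : Ω → Bool) (T : Finset F) {t : ℕ} (ht : t ≤ (collisionSet π ω ∩ T).ncard) :
    ∃ R : Finset (Ω × Ω), #R = t ∧ Set.InjOn (π ∘ Prod.fst) (R : Set (Ω × Ω)) ∧
      ∀ x ∈ R, x.1 < x.2 ∧ π x.1 = π x.2 ∧ π x.1 ∈ T ∧ ω x.1 = true ∧ ω x.2 = true := by
  classical
  set C : Finset (Ω × Ω) :=
    {x | x.1 < x.2 ∧ π x.1 = π x.2 ∧ π x.1 ∈ T ∧ ω x.1 = true ∧ ω x.2 = true}
  have himage : collisionSet π ω ∩ T = (π ∘ Prod.fst) '' (C : Set (Ω × Ω)) := by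
    ext f
    simp only [collisionSet, C, Set.mem_inter_iff, Set.mem_ofPred_eq, mem_coe, coe_filter,
      Set.mem_image, comp_apply, mem_univ, true_and, Prod.exists]
    constructor
    · rintro ⟨⟨g, h, hne, hg, hh, rfl, hhf⟩, hfT⟩
      rcases hne.lt_or_gt with hlt | hlt
      · exact ⟨g, h, ⟨hlt, hhf.symm, hfT, hg, hh⟩, rfl⟩
      · exact ⟨h, g, ⟨hlt, hhf, hhf ▸ hfT, hh, hg⟩, hhf⟩
    · rintro ⟨g, h, ⟨hlt, hgh, hfT, hg, hh⟩, rfl⟩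
      exact ⟨⟨g, h, hlt.ne, hg, hh, rfl, hgh.symm⟩, hfT⟩
  obtain ⟨u, huC, hbij⟩ := Set.exists_subset_bijOn (C : Set (Ω × Ω)) (π ∘ Prod.fst)
  lift u to Finset (Ω × Ω) using C.finite_toSet.subset huC
  have htu : t ≤ #u := by
    rwa [← Set.ncard_coe_finset, ← hbij.injOn.ncard_image, hbij.image_eq, ← himage]
  obtain ⟨R, hRu, hR⟩ := exists_subset_card_eq htu
  exact ⟨R, hR, hbij.injOn.mono (by simpa), fun x hx => by simpa [C] using huC (hRu hx)⟩

end Collisions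

theorem pi_bernoulliMeasure_le_ncard_collisionSet_inter_le {Ω F : Type*} [Fintype Ω]
    [DecidableEq Ω] [DecidableEq F] {p : ℝ≥0∞} (hp : p ≤ 1) (π : Ω → F) (T : Finset F) (t : ℕ) :
    Measure.pi (fun _ : Ω => bernoulliMeasure p) {ω | t ≤ (collisionSet π ω ∩ T).ncard} ≤
      (2⁻¹ * #{x : Ω × Ω | x.1 ≠ x.2 ∧ π x.1 = π x.2 ∧ π x.1 ∈ T} * p ^ 2) ^ t := by
  classical
  -- any linear order: it only serves to count each unordered pair once
  let : LinearOrder Ω := LinearOrder.lift' _ (Fintype.equivFin Ω).injective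
  set Q : Finset (Ω × Ω) := {x | x.1 ≠ x.2 ∧ π x.1 = π x.2 ∧ π x.1 ∈ T}
  set P := {x ∈ Q | x.1 < x.2}
  set 𝓡 := (P.powersetCard t).filter fun R : Finset (Ω × Ω) =>
    Set.InjOn (π ∘ Prod.fst) (R : Set (Ω × Ω))
  let cylinder (R : Finset (Ω × Ω)) : Set (Ω → Bool) :=
    {ω | ∀ x ∈ R.image Prod.fst ∪ R.image Prod.snd, ω x = true}
  have hcover : {ω | t ≤ (collisionSet π ω ∩ T).ncard} ⊆ ⋃ R ∈ 𝓡, cylinder R := by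
    intro ω hω
    obtain ⟨R, hRt, hinj, hR⟩ := exists_pairs_of_le_ncard_collisionSet_inter π ω T hω
    simp only [Set.mem_iUnion]
    refine ⟨R, ?_, ?_⟩
    · refine mem_filter.2 ⟨mem_powersetCard.2 ⟨fun x hx => ?_, hRt⟩, hinj⟩
      obtain ⟨hlt, hfib, hT, -⟩ := hR x hx
      simp only [P, Q, mem_filter, mem_univ, true_and]
      exact ⟨⟨hlt.ne, hfib, hT⟩, hlt⟩
    · simp only [cylinder, Set.mem_ofPred_eq, mem_union, mem_image]
      rintro _ (⟨x, hx, rfl⟩ | ⟨x, hx, rfl⟩)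
      exacts [(hR x hx).2.2.2.1, (hR x hx).2.2.2.2]
  have hcylinder : ∀ R ∈ 𝓡,
      Measure.pi (fun _ : Ω => bernoulliMeasure p) (cylinder R) = p ^ (2 * t) := by
    intro R hR
    obtain ⟨hRP, hRt⟩ := mem_powersetCard.1 (mem_filter.1 hR).1
    have hpair : ∀ x ∈ R, x.1 ≠ x.2 ∧ π x.1 = π x.2 := by
      intro x hx
      have hxP := hRP hx
      simp only [P, Q, mem_filter, mem_univ, true_and] at hxP
      exact ⟨hxP.1.1, hxP.1.2.1⟩
    rw [pi_bernoulliMeasure_forall_mem_eq_true hp,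
      card_image_fst_union_image_snd π hpair (mem_filter.1 hR).2, hRt]
  have hhalf : 2 * #P ≤ #Q := two_mul_card_filter_fst_lt_snd_le fun x hx => by
    simp only [Q, mem_filter, mem_univ, true_and] at hx ⊢
    exact ⟨hx.1.symm, hx.2.1.symm, hx.2.1 ▸ hx.2.2⟩
  calc _ ≤ ∑ R ∈ 𝓡, Measure.pi (fun _ : Ω => bernoulliMeasure p) (cylinder R) :=
        (measure_mono hcover).trans (measure_biUnion_finset_le _ _)
    _ = #𝓡 * p ^ (2 * t) := by rw [sum_congr rfl hcylinder, sum_const, nsmul_eq_mul]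
    _ ≤ #P ^ t * p ^ (2 * t) := by
      gcongr
      exact_mod_cast (card_filter_le _ _).trans
        ((card_powersetCard t P).trans_le (Nat.choose_le_pow _ _))
    _ ≤ (2⁻¹ * #Q * p ^ 2) ^ t := by
      rw [pow_mul, ← mul_pow]
      gcongr
      calc (#P : ℝ≥0∞) = 2⁻¹ * (2 * #P) := by
            rw [← mul_assoc, ENNReal.inv_mul_cancel two_ne_zero ENNReal.ofNat_ne_top, one_mul]
        _ ≤ 2⁻¹ * #Q := by gcongr; exact_mod_cast hhalf

section Reduction

variable {G H K : Type*} [AddCommGroup G] [AddCommGroup H] [AddCommGroup K] [Fintype G]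
  [Fintype H] [Fintype K] [DecidableEq G] [DecidableEq H] [DecidableEq K]

lemma card_collisionPairs_mul_sq_le_one (φ : G →+ H) (σ : H →+ K) (hφ : Surjective φ)
    (hσ : Surjective σ) {k : ℕ} (hk : k ^ 2 ≤ Fintype.card H * Fintype.card K) (b : K) :
    (#{x : G × G | x.1 ≠ x.2 ∧ φ x.1 = φ x.2 ∧ φ x.1 ∈ ({f | σ f = b} : Finset H)} : ℝ≥0∞) *
      (k / Fintype.card G) ^ 2 ≤ 1 := by
  have hsub : #{x : G × G | x.1 ≠ x.2 ∧ φ x.1 = φ x.2 ∧ φ x.1 ∈ ({f | σ f = b} : Finset H)} ≤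
      #{x : G × G | φ x.1 = φ x.2 ∧ σ.comp φ x.1 = b} :=
    card_le_card fun x => by simp +contextual
  have hnat := calc
    #{x : G × G | x.1 ≠ x.2 ∧ φ x.1 = φ x.2 ∧ φ x.1 ∈ ({f | σ f = b} : Finset H)} * k ^ 2
      ≤ #{x : G × G | φ x.1 = φ x.2 ∧ σ.comp φ x.1 = b} * (Fintype.card H * Fintype.card K) :=
        Nat.mul_le_mul hsub hk
    _ = Fintype.card G ^ 2 :=
        φ.card_fiberPairs_mul_card_mul_card (σ.comp φ) hφ (hσ.comp hφ) b
  rw [div_eq_mul_inv, mul_pow, ← ENNReal.inv_pow, ← mul_assoc, ← div_eq_mul_inv,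
    ENNReal.div_le_iff (by simp) (by simp), one_mul]
  exact_mod_cast hnat

theorem one_sub_le_pi_bernoulliMeasure_forall_ncard_collisionSet_lt (φ : G →+ H) (σ : H →+ K)
    (hφ : Surjective φ) (hσ : Surjective σ) {k : ℕ} (hkG : k ≤ Fintype.card G)
    (hk : k ^ 2 ≤ Fintype.card H * Fintype.card K) (t : ℕ) :
    1 - Fintype.card K * 2⁻¹ ^ t ≤ Measure.pi (fun _ : G => bernoulliMeasure (k / Fintype.card G))
        {ω | ∀ b, (collisionSet φ ω ∩ ({f | σ f = b} : Finset H)).ncard < t} := by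
  have hp : (k / Fintype.card G : ℝ≥0∞) ≤ 1 :=
    ENNReal.div_le_of_le_mul (by simpa using hkG)
  have := isProbabilityMeasure_bernoulliMeasure hp
  refine le_trans (tsub_le_tsub_left ?_ 1) (one_sub_le_measure_of_compl_subset (t :=
    ⋃ b, {ω | t ≤ (collisionSet φ ω ∩ ({f | σ f = b} : Finset H)).ncard}) (by intro ω; simp))
  calc _ ≤ ∑ b, Measure.pi (fun _ : G => bernoulliMeasure (k / Fintype.card G))
          {ω | t ≤ (collisionSet φ ω ∩ ({f | σ f = b} : Finset H)).ncard} :=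
        measure_iUnion_fintype_le _ _
    _ ≤ ∑ _b : K, (2⁻¹ : ℝ≥0∞) ^ t := by
      gcongr with b
      refine (pi_bernoulliMeasure_le_ncard_collisionSet_inter_le hp φ _ t).trans ?_
      rw [mul_assoc]
      gcongr
      exact mul_le_of_le_one_right' (card_collisionPairs_mul_sq_le_one φ σ hφ hσ hk b)
    _ = Fintype.card K * 2⁻¹ ^ t := by rw [sum_const, card_univ, nsmul_eq_mul]

end Reduction

theorem stmt13 : ∃ C : ℝ, 0 < C ∧
    ∀ (m : ℕ), 1 ≤ m → ∀ (n : ℕ), n = 2 ^ m → ∀ [NeZero n],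
    ∀ (d : ℕ), 1 ≤ d → ∀ (k : ℕ), 1 ≤ k → k ≤ n ^ d →
    ∀ (B B' : Fin d → ℕ),
      (∀ q, ∃ e : ℕ, B q = 2 ^ e) → (∀ q, ∃ e : ℕ, B' q = 2 ^ e) →
      ∀ (hB'B : ∀ q, B' q ∣ B q) (hB : ∀ q, B q ∣ n),
      k ^ 2 ≤ (∏ q, B q) * (∏ q, B' q) →
    ∀ (μ : Measure ((Fin d → ZMod n) → Bool)),
      μ = (Measure.pi fun _ : Fin d → ZMod n =>
        (1 - (k : ℝ≥0∞) / ((n : ℝ≥0∞) ^ d)) • Measure.dirac false +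
          ((k : ℝ≥0∞) / ((n : ℝ≥0∞) ^ d)) • Measure.dirac true) →
    1 - 1 / ((n : ℝ≥0∞) ^ d) ^ 3 ≤
      μ {ω | ∀ b : ∀ q, ZMod (B' q),
        (({f : ∀ q, ZMod (B q) |
            (∃ g h : Fin d → ZMod n, g ≠ h ∧ ω g = true ∧ ω h = true ∧
              (∀ q, ZMod.castHom (hB q) (ZMod (B q)) (g q) = f q) ∧
              (∀ q, ZMod.castHom (hB q) (ZMod (B q)) (h q) = f q)) ∧
            (∀ q, ZMod.castHom (hB'B q) (ZMod (B' q)) (f q) = b q)}.ncard : ℝ))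
          ≤ C * Real.logb 2 ((n : ℝ) ^ d)} := by
  refine ⟨4, by norm_num, ?_⟩
  intro m _ n hn _ d _ k _ hkN B B' _ _ hB'B hB hk2 μ hμ
  subst hn hμ
  have (q : Fin d) : NeZero (B q) := ⟨ne_zero_of_dvd_ne_zero (NeZero.ne _) (hB q)⟩
  have (q : Fin d) : NeZero (B' q) := ⟨ne_zero_of_dvd_ne_zero (NeZero.ne (B q)) (hB'B q)⟩
  set φ := ZMod.piCastHom (a := fun _ : Fin d => 2 ^ m) hB
  set σ := ZMod.piCastHom hB'B
  have hφ := ZMod.piCastHom_surjective hB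
  have hσ := ZMod.piCastHom_surjective hB'B
  have hcardG : Fintype.card (Fin d → ZMod (2 ^ m)) = (2 ^ m) ^ d := by simp [ZMod.card]
  have hN : (((2 ^ m) ^ d : ℕ) : ℝ≥0∞) = 2 ^ (m * d) := by push_cast; rw [pow_mul]
  have hgood := one_sub_le_pi_bernoulliMeasure_forall_ncard_collisionSet_lt φ σ hφ hσ (k := k)
    (by simpa [ZMod.card] using hkN) (by simpa [ZMod.card] using hk2) (4 * (m * d))
  have hcardK : (Fintype.card (∀ q, ZMod (B' q)) : ℝ≥0∞) ≤ 2 ^ (m * d) := by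
    rw [← hN]
    exact_mod_cast hcardG ▸ Fintype.card_le_of_surjective _ (hσ.comp hφ)
  have hlog : Real.logb 2 (((2 ^ m : ℕ) : ℝ) ^ d) = (m * d : ℕ) := by
    rw [← Nat.cast_pow, ← pow_mul, Nat.cast_pow, Real.logb_pow, Nat.cast_ofNat,
      Real.logb_self_eq_one one_lt_two, mul_one]
  rw [hcardG, Nat.cast_pow] at hgood
  refine le_trans (tsub_le_tsub_left ?_ 1) (hgood.trans (measure_mono fun ω hω b => ?_))
  · rw [← Nat.cast_pow, hN]
    exact ENNReal.mul_inv_two_pow_four_mul_le hcardK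
  rw [hlog]
  convert (by exact_mod_cast (hω b).le : (Set.ncard _ : ℝ) ≤ (4 * (m * d) : ℕ)) using 3
  · ext f
    simp [collisionSet, φ, σ, funext_iff]
  · push_cast; ring
end
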